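/- Let G₁ and G₂ be context-free grammars over a common terminal alphabet T with start symbols S₁, S₂. In the quad-system QS_c encoding G₁ and G₂ (as defined in the context), for every terminal word w = t₁…t_p ∈ T*, there exist constants b₁,…,b_p such that the quads c:(a,t₁,b₁), c:(b₁,t₂,b₂), …, c:(b_{p−1},t_p,b_p), c:(b_p, rdf:type, C) all belong to dChase(QS_c). -/
import Mathlib


/-- Constants of the chase: the initial constant `a` and skolem blank nodes
`sk t x` created by the generating rule for terminal `t` applied to node `x`. -/
inductive Node (Sym : Type) where
  | a : Node Sym
  | sk : Sym → Node Sym → Node Sym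

/-- Quads of the single-context quad-system: `edge x l y` stands for c:(x,l,y) and
`typC x` stands for c:(x, rdf:type, C). -/
inductive Quad (Sym : Type) where
  | edge : Node Sym → Sym → Node Sym → Quad Sym
  | typC : Node Sym → Quad Sym

/-- `EdgePath S x w y`: there is a path of edges in `S` from `x` to `y` whose labels
spell the word `w`. -/
def EdgePath {Sym : Type} (S : Set (Quad Sym)) : Node Sym → List Sym → Node Sym → Prop
  | x, [], y => x = y
  | x, l :: ls, y => ∃ z, Quad.edge x l z ∈ S ∧ EdgePath S z ls y

/-- `Closed T P S`: the set of quads `S` contains the initial quad c:(a,rdf:type,C)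
and is closed under the skolemized terminal rules (for terminals in `T`) and the
production-encoding rules (for productions in `P`). -/
def Closed {Sym : Type} (T : Set Sym) (P : Set (Sym × List Sym)) (S : Set (Quad Sym)) : Prop :=
  Quad.typC Node.a ∈ S ∧
  (∀ t x, t ∈ T → Quad.typC x ∈ S →
    Quad.edge x t (Node.sk t x) ∈ S ∧ Quad.typC (Node.sk t x) ∈ S) ∧
  (∀ v w x y, (v, w) ∈ P → EdgePath S x w y → Quad.edge x v y ∈ S)

/-- The dChase: the least set of quads closed under all the rules. -/
def dChase {Sym : Type} (T : Set Sym) (P : Set (Sym × List Sym)) : Set (Quad Sym) :=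
  ⋂₀ {S | Closed T P S}

/-- One-step derivation of the grammar with productions `P`. -/
def GStep {Sym : Type} (P : Set (Sym × List Sym)) (u w : List Sym) : Prop :=
  ∃ x v y rhs, (v, rhs) ∈ P ∧ u = x ++ v :: y ∧ w = x ++ rhs ++ y

/-- Derivability `u ⇒* w` of the grammar with productions `P`. -/
def Derives {Sym : Type} (P : Set (Sym × List Sym)) : List Sym → List Sym → Prop :=
  Relation.ReflTransGen (GStep P)

lemma edgePath_mono {Sym : Type} {S S' : Set (Quad Sym)} (h : S ⊆ S') :
    ∀ w x y, EdgePath S x w y → EdgePath S' x w y := by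
  intro w
  induction w with
  | nil => intro x y hp; exact hp
  | cons l ls ih =>
    rintro x y ⟨z, hz, hp⟩
    exact ⟨z, h hz, ih z y hp⟩

lemma closed_dChase {Sym : Type} (T : Set Sym) (P : Set (Sym × List Sym)) :
    Closed T P (dChase T P) := by
  refine ⟨?_, ?_, ?_⟩
  · intro S hS; exact hS.1
  · intro t x ht hx
    constructor
    · intro S hS; exact (hS.2.1 t x ht (hx S hS)).1
    · intro S hS; exact (hS.2.1 t x ht (hx S hS)).2
  · intro v w x y hP hp S hS
    exact hS.2.2 v w x y hP (edgePath_mono (fun q hq => Set.mem_sInter.mp hq S hS) w x y hp)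

lemma stmt_aux {Sym : Type} (T : Set Sym) (P : Set (Sym × List Sym))
    (w : List Sym) (hw : ∀ t ∈ w, t ∈ T) :
    ∀ x, Quad.typC x ∈ dChase T P →
      ∃ b : Node Sym, EdgePath (dChase T P) x w b ∧ Quad.typC b ∈ dChase T P := by
  induction w with
  | nil => intro x hx; exact ⟨x, rfl, hx⟩
  | cons t ls ih =>
    intro x hx
    have ht : t ∈ T := hw t (by simp)
    obtain ⟨he, hty⟩ := (closed_dChase T P).2.1 t x ht hx
    obtain ⟨b, hp, hb⟩ := ih (fun s hs => hw s (by simp [hs])) (Node.sk t x) hty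
    exact ⟨b, ⟨Node.sk t x, he, hp⟩, hb⟩

/-- Claim 1: for every terminal word w = t₁…t_p there are constants b₁,…,b_p with
c:(a,t₁,b₁), …, c:(b_{p-1},t_p,b_p) and c:(b_p,rdf:type,C) in the dChase. -/
theorem stmt_6 {Sym : Type} (T : Set Sym) (P : Set (Sym × List Sym))
    (w : List Sym) (hw : ∀ t ∈ w, t ∈ T) :
    ∃ b : Node Sym, EdgePath (dChase T P) Node.a w b ∧ Quad.typC b ∈ dChase T P :=
  stmt_aux T P w hw Node.a (closed_dChase T P).1
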